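/- Let T be a left continuous t-norm on [0,1] and L a right continuous L-operation on [0,∞]. The following are equivalent: (1) τ_{T,L}(f,g) = (L⊗T)(f,g) for all d.d.f.'s f, g; (2) τ_{T,L}(f,g) is a d.d.f. for all d.d.f.'s f, g; (3) L satisfies the condition (LCS): if x < x', y < y' and L(x',y') < ∞, then L(x,y) < L(x',y'). -/

import Mathlib

open ENNReal Set

/-- A distance distribution function: increasing `f : [0,∞] → [0,1]` with
`f 0 = 0`, `f ∞ = 1`, left continuous on `(0,∞)`. -/
def IsDDF (f : ℝ≥0∞ → ℝ≥0∞) : Prop :=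
  Monotone f ∧ (∀ x, f x ≤ 1) ∧ f 0 = 0 ∧ f ⊤ = 1 ∧
    ∀ x : ℝ≥0∞, 0 < x → x < ⊤ → f x = ⨆ y ∈ Set.Iio x, f y

/-- The largest quasi-inverse `f∨ y = inf {x | f x > y}`. -/
noncomputable def qInv (f : ℝ≥0∞ → ℝ≥0∞) : ℝ≥0∞ → ℝ≥0∞ :=
  fun y => sInf {x | y < f x}

/-- The unit interval `[0,1]` inside `[0,∞]`. -/
def I01 : Set ℝ≥0∞ := Set.Icc 0 1

/-- A left continuous t-norm on `[0,1]`: commutative, associative, increasing in each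
place, identity `1`, left continuous in each variable. -/
def IsLeftContTNorm (T : ℝ≥0∞ → ℝ≥0∞ → ℝ≥0∞) : Prop :=
  (∀ p ∈ I01, ∀ q ∈ I01, T p q ∈ I01) ∧
  (∀ p ∈ I01, ∀ q ∈ I01, T p q = T q p) ∧
  (∀ p ∈ I01, ∀ q ∈ I01, ∀ r ∈ I01, T (T p q) r = T p (T q r)) ∧
  (∀ p ∈ I01, T p 1 = p) ∧
  (∀ q ∈ I01, ∀ p₁ ∈ I01, ∀ p₂ ∈ I01, p₁ ≤ p₂ → T p₁ q ≤ T p₂ q) ∧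
  (∀ q ∈ I01, ∀ p ∈ I01, 0 < p → T p q = ⨆ p' ∈ Set.Iio p, T p' q)

/-- A right continuous `L`-operation on `[0,∞]`: commutative, associative, increasing in
each place, identity `0`, right continuous in each variable. -/
def IsRightContLOp (L : ℝ≥0∞ → ℝ≥0∞ → ℝ≥0∞) : Prop :=
  (∀ x y, L x y = L y x) ∧
  (∀ x y z, L (L x y) z = L x (L y z)) ∧
  (∀ x, L x 0 = x) ∧
  (∀ y x₁ x₂, x₁ ≤ x₂ → L x₁ y ≤ L x₂ y) ∧
  (∀ y x, x < ⊤ → L x y = ⨅ x' ∈ Set.Ioi x, L x' y)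

/-- Joint continuity of a t-norm on `[0,1] × [0,1]`. -/
def TNormContinuous (T : ℝ≥0∞ → ℝ≥0∞ → ℝ≥0∞) : Prop :=
  ContinuousOn (fun pq : ℝ≥0∞ × ℝ≥0∞ => T pq.1 pq.2) (I01 ×ˢ I01)

/-- The tensor-product triangle function:
`(L ⊗ T)(f,g)(x) = sup {T (f r) (g s) | L r s < x}` for `x < ∞`, and `1` at `∞`. -/
noncomputable def tensor (L T : ℝ≥0∞ → ℝ≥0∞ → ℝ≥0∞) (f g : ℝ≥0∞ → ℝ≥0∞) :
    ℝ≥0∞ → ℝ≥0∞ :=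
  fun x => if x = ⊤ then 1 else ⨆ r, ⨆ s, ⨆ _ : L r s < x, T (f r) (g s)

/-- `τ_{T,L}(f,g)(x) = sup {T (f r) (g s) | L r s ≤ x}`. -/
noncomputable def tauTL (L T : ℝ≥0∞ → ℝ≥0∞ → ℝ≥0∞) (f g : ℝ≥0∞ → ℝ≥0∞) :
    ℝ≥0∞ → ℝ≥0∞ :=
  fun x => ⨆ r, ⨆ s, ⨆ _ : L r s ≤ x, T (f r) (g s)

/-! The values of a d.d.f. lie in `[0,1]`, so `τ = τ_{T,L}(f,g)` is always increasing with
`τ(0) = 0` and `τ(∞) = 1`; as `(L⊗T)(f,g)` is the left continuous regularization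
`x ↦ sup_{y<x} τ(y)` of `τ` on `[0,∞)`, (1) and (2) are equivalent. Under (LCS) every pair
`(r, s)` with `L(r,s) = x` is approached from below by pairs `(u, v)` with `L(u,v) < x`, and left
continuity of `f`, `g` and `T` gives (1). Conversely, if `L(x',y') ≤ L(x,y)` with `x < x'`,
`y < y'`, the unit steps `ε_x`, `ε_y` produce a `τ` that jumps from `0` to `1` at `L(x',y')`
without being left continuous there. -/

lemma zero_mem_I01 : (0 : ℝ≥0∞) ∈ I01 := ⟨le_rfl, zero_le_one⟩

lemma one_mem_I01 : (1 : ℝ≥0∞) ∈ I01 := ⟨zero_le, le_rfl⟩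

namespace IsDDF

variable {f : ℝ≥0∞ → ℝ≥0∞}

lemma map_zero (hf : IsDDF f) : f 0 = 0 := hf.2.2.1

lemma map_top (hf : IsDDF f) : f ⊤ = 1 := hf.2.2.2.1

lemma mem_I01 (hf : IsDDF f) (r : ℝ≥0∞) : f r ∈ I01 := ⟨zero_le, hf.2.1 r⟩

lemma exists_lt_apply_of_lt_apply (hf : IsDDF f) {r p : ℝ≥0∞} (hr : r < ⊤) (hp : p < f r) :
    ∃ u < r, p < f u := by
  have hr0 : 0 < r := pos_iff_ne_zero.2 fun h => by simp [h, hf.map_zero] at hp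
  rw [hf.2.2.2.2 r hr0 hr] at hp
  simpa using lt_biSup_iff.1 hp

end IsDDF

namespace IsLeftContTNorm

variable {T : ℝ≥0∞ → ℝ≥0∞ → ℝ≥0∞}

lemma mem_I01 (hT : IsLeftContTNorm T) {p q : ℝ≥0∞} (hp : p ∈ I01) (hq : q ∈ I01) :
    T p q ∈ I01 :=
  hT.1 p hp q hq

lemma comm (hT : IsLeftContTNorm T) {p q : ℝ≥0∞} (hp : p ∈ I01) (hq : q ∈ I01) :
    T p q = T q p :=
  hT.2.1 p hp q hq

lemma mono_left (hT : IsLeftContTNorm T) {p₁ p₂ q : ℝ≥0∞} (hq : q ∈ I01) (hp₁ : p₁ ∈ I01)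
    (hp₂ : p₂ ∈ I01) (h : p₁ ≤ p₂) : T p₁ q ≤ T p₂ q :=
  hT.2.2.2.2.1 q hq p₁ hp₁ p₂ hp₂ h

lemma one_one (hT : IsLeftContTNorm T) : T 1 1 = 1 := hT.2.2.2.1 1 one_mem_I01

lemma zero_left (hT : IsLeftContTNorm T) {q : ℝ≥0∞} (hq : q ∈ I01) : T 0 q = 0 :=
  le_antisymm
    (calc T 0 q = T q 0 := hT.comm zero_mem_I01 hq
      _ ≤ T 1 0 := hT.mono_left zero_mem_I01 hq one_mem_I01 hq.2
      _ = T 0 1 := hT.comm one_mem_I01 zero_mem_I01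
      _ = 0 := hT.2.2.2.1 0 zero_mem_I01)
    zero_le

lemma zero_right (hT : IsLeftContTNorm T) {p : ℝ≥0∞} (hp : p ∈ I01) : T p 0 = 0 := by
  rw [hT.comm hp zero_mem_I01, hT.zero_left hp]

lemma apply_le_iSup_Iio_left (hT : IsLeftContTNorm T) {f : ℝ≥0∞ → ℝ≥0∞} (hf : IsDDF f)
    {r q : ℝ≥0∞} (hr : r < ⊤) (hq : q ∈ I01) : T (f r) q ≤ ⨆ u ∈ Iio r, T (f u) q := by
  rcases (zero_le : 0 ≤ f r).eq_or_lt with h0 | hpos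
  · rw [← h0, hT.zero_left hq]
    exact zero_le
  rw [hT.2.2.2.2.2 q hq (f r) (hf.mem_I01 r) hpos]
  refine iSup₂_le fun p hp => ?_
  obtain ⟨u, hu, hpu⟩ := hf.exists_lt_apply_of_lt_apply hr hp
  have hpI : p ∈ I01 := ⟨zero_le, hp.le.trans (hf.mem_I01 r).2⟩
  exact le_iSup₂_of_le u hu (hT.mono_left hq hpI (hf.mem_I01 u) hpu.le)

lemma apply_le_iSup_Iio_right (hT : IsLeftContTNorm T) {g : ℝ≥0∞ → ℝ≥0∞} (hg : IsDDF g)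
    {p s : ℝ≥0∞} (hs : s < ⊤) (hp : p ∈ I01) : T p (g s) ≤ ⨆ v ∈ Iio s, T p (g v) := by
  rw [hT.comm hp (hg.mem_I01 s)]
  refine (hT.apply_le_iSup_Iio_left hg hs hp).trans (iSup₂_mono fun v _ => ?_)
  rw [hT.comm (hg.mem_I01 v) hp]

end IsLeftContTNorm

namespace IsRightContLOp

variable {L : ℝ≥0∞ → ℝ≥0∞ → ℝ≥0∞}

lemma mono (hL : IsRightContLOp L) {r r' s s' : ℝ≥0∞} (hr : r ≤ r') (hs : s ≤ s') :
    L r s ≤ L r' s' :=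
  calc L r s ≤ L r' s := hL.2.2.2.1 s r r' hr
    _ = L s r' := hL.1 r' s
    _ ≤ L s' r' := hL.2.2.2.1 r' s s' hs
    _ = L r' s' := hL.1 s' r'

lemma le_left (hL : IsRightContLOp L) (r s : ℝ≥0∞) : r ≤ L r s :=
  (hL.2.2.1 r).symm.le.trans (hL.mono le_rfl zero_le)

lemma le_right (hL : IsRightContLOp L) (r s : ℝ≥0∞) : s ≤ L r s :=
  hL.1 s r ▸ hL.le_left s r

end IsRightContLOp

section TriangleFunctions

variable {T L : ℝ≥0∞ → ℝ≥0∞ → ℝ≥0∞} {f g : ℝ≥0∞ → ℝ≥0∞} {x : ℝ≥0∞}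

lemma le_tauTL {r s : ℝ≥0∞} (h : L r s ≤ x) : T (f r) (g s) ≤ tauTL L T f g x :=
  le_iSup₂_of_le r s (le_iSup_of_le h le_rfl)

lemma tauTL_le_iff {a : ℝ≥0∞} :
    tauTL L T f g x ≤ a ↔ ∀ r s, L r s ≤ x → T (f r) (g s) ≤ a := by
  simp only [tauTL, iSup_le_iff]

lemma le_tensor {r s : ℝ≥0∞} (hx : x ≠ ⊤) (h : L r s < x) :
    T (f r) (g s) ≤ tensor L T f g x := by
  rw [tensor, if_neg hx]
  exact le_iSup₂_of_le r s (le_iSup_of_le h le_rfl)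

lemma tauTL_monotone : Monotone (tauTL L T f g) := fun _ _ hab =>
  tauTL_le_iff.2 fun _ _ h => le_tauTL (h.trans hab)

lemma tauTL_le_one (hT : IsLeftContTNorm T) (hf : IsDDF f) (hg : IsDDF g) :
    tauTL L T f g x ≤ 1 :=
  tauTL_le_iff.2 fun r s _ => (hT.mem_I01 (hf.mem_I01 r) (hg.mem_I01 s)).2

lemma tauTL_zero (hT : IsLeftContTNorm T) (hL : IsRightContLOp L) (hf : IsDDF f)
    (hg : IsDDF g) : tauTL L T f g 0 = 0 := by
  refine nonpos_iff_eq_zero.1 (tauTL_le_iff.2 fun r s h => ?_)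
  rw [nonpos_iff_eq_zero.1 ((hL.le_left r s).trans h), hf.map_zero, hT.zero_left (hg.mem_I01 s)]

lemma tauTL_top (hT : IsLeftContTNorm T) (hf : IsDDF f) (hg : IsDDF g) :
    tauTL L T f g ⊤ = 1 := by
  refine le_antisymm (tauTL_le_one hT hf hg) ?_
  simpa [hf.map_top, hg.map_top, hT.one_one] using le_tauTL (T := T) (f := f) (g := g)
    (le_top : L ⊤ ⊤ ≤ ⊤)

lemma tensor_eq_iSup_tauTL (hx : x ≠ ⊤) :
    tensor L T f g x = ⨆ y ∈ Iio x, tauTL L T f g y := by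
  refine le_antisymm ?_ (iSup₂_le fun y hy =>
    tauTL_le_iff.2 fun r s h => le_tensor hx (h.trans_lt hy))
  rw [tensor, if_neg hx]
  exact iSup₂_le fun r s => iSup_le fun h => le_iSup₂_of_le (L r s) h (le_tauTL le_rfl)

theorem isDDF_tauTL_iff_eq_tensor (hT : IsLeftContTNorm T) (hL : IsRightContLOp L)
    (hf : IsDDF f) (hg : IsDDF g) : IsDDF (tauTL L T f g) ↔ tauTL L T f g = tensor L T f g := by
  constructor
  · intro hτ
    funext x
    by_cases hx : x = ⊤
    · rw [hx, tensor, if_pos rfl, tauTL_top hT hf hg]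
    rw [tensor_eq_iSup_tauTL hx]
    rcases (zero_le : 0 ≤ x).eq_or_lt with h0 | hpos
    · simp [← h0, tauTL_zero hT hL hf hg]
    exact hτ.2.2.2.2 x hpos (lt_top_iff_ne_top.2 hx)
  · intro h
    refine ⟨tauTL_monotone, fun _ => tauTL_le_one hT hf hg, tauTL_zero hT hL hf hg,
      tauTL_top hT hf hg, fun x _ hx => ?_⟩
    rw [← tensor_eq_iSup_tauTL hx.ne, ← h]

theorem tauTL_eq_tensor_of_LCS (hT : IsLeftContTNorm T) (hL : IsRightContLOp L)
    (hLCS : ∀ x x' y y' : ℝ≥0∞, x < x' → y < y' → L x' y' < ⊤ → L x y < L x' y')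
    (hf : IsDDF f) (hg : IsDDF g) : tauTL L T f g = tensor L T f g := by
  funext x
  by_cases hx : x = ⊤
  · rw [hx, tensor, if_pos rfl, tauTL_top hT hf hg]
  refine le_antisymm (tauTL_le_iff.2 fun r s h => ?_)
    ((tensor_eq_iSup_tauTL hx).trans_le (iSup₂_le fun y hy => tauTL_monotone hy.le))
  rcases h.lt_or_eq with hlt | rfl
  · exact le_tensor hx hlt
  have hLrs : L r s < ⊤ := lt_top_iff_ne_top.2 hx
  calc T (f r) (g s) ≤ ⨆ u ∈ Iio r, T (f u) (g s) :=
        hT.apply_le_iSup_Iio_left hf ((hL.le_left r s).trans_lt hLrs) (hg.mem_I01 s)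
    _ ≤ ⨆ u ∈ Iio r, ⨆ v ∈ Iio s, T (f u) (g v) := iSup₂_mono fun u _ =>
        hT.apply_le_iSup_Iio_right hg ((hL.le_right r s).trans_lt hLrs) (hf.mem_I01 u)
    _ ≤ tensor L T f g (L r s) := iSup₂_le fun u hu => iSup₂_le fun v hv =>
        le_tensor hx (hLCS u r v s hu hv hLrs)

end TriangleFunctions

section UnitStep

variable {T L : ℝ≥0∞ → ℝ≥0∞ → ℝ≥0∞}

noncomputable def unitStep (a : ℝ≥0∞) : ℝ≥0∞ → ℝ≥0∞ := fun t => if a < t then 1 else 0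

lemma unitStep_of_lt {a t : ℝ≥0∞} (h : a < t) : unitStep a t = 1 := if_pos h

lemma unitStep_of_le {a t : ℝ≥0∞} (h : t ≤ a) : unitStep a t = 0 := if_neg h.not_gt

lemma unitStep_le_one (a t : ℝ≥0∞) : unitStep a t ≤ 1 := by
  unfold unitStep
  split_ifs <;> simp

lemma isDDF_unitStep {a : ℝ≥0∞} (ha : a < ⊤) : IsDDF (unitStep a) := by
  refine ⟨fun s t hst => ?_, unitStep_le_one a, unitStep_of_le zero_le, unitStep_of_lt ha,
    fun t _ _ => le_antisymm ?_ (iSup₂_le fun u hu => ?_)⟩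
  · rcases lt_or_ge a s with h | h
    · rw [unitStep_of_lt h, unitStep_of_lt (h.trans_le hst)]
    · rw [unitStep_of_le h]
      exact zero_le
  · rcases lt_or_ge a t with h | h
    · obtain ⟨b, hab, hbt⟩ := exists_between h
      rw [unitStep_of_lt h]
      exact le_iSup₂_of_le b hbt (unitStep_of_lt hab).ge
    · rw [unitStep_of_le h]
      exact zero_le
  · rcases lt_or_ge a u with h | h
    · rw [unitStep_of_lt h, unitStep_of_lt (h.trans hu)]
    · rw [unitStep_of_le h]
      exact zero_le

lemma tauTL_unitStep_eq_zero (hT : IsLeftContTNorm T) (hL : IsRightContLOp L)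
    {x y t : ℝ≥0∞} (ht : t < L x y) : tauTL L T (unitStep x) (unitStep y) t = 0 := by
  refine nonpos_iff_eq_zero.1 (tauTL_le_iff.2 fun r s h => ?_)
  rcases le_or_gt r x with hr | hr
  · rw [unitStep_of_le hr, hT.zero_left ⟨zero_le, unitStep_le_one y s⟩]
  rcases le_or_gt s y with hs | hs
  · rw [unitStep_of_le hs, hT.zero_right ⟨zero_le, unitStep_le_one x r⟩]
  exact absurd (h.trans_lt ht) (hL.mono hr.le hs.le).not_gt

theorem LCS_of_forall_isDDF_tauTL (hT : IsLeftContTNorm T) (hL : IsRightContLOp L)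
    (hDDF : ∀ f g : ℝ≥0∞ → ℝ≥0∞, IsDDF f → IsDDF g → IsDDF (tauTL L T f g)) :
    ∀ x x' y y' : ℝ≥0∞, x < x' → y < y' → L x' y' < ⊤ → L x y < L x' y' := by
  intro x x' y y' hx hy htop
  by_contra! hle
  have hτ := hDDF _ _ (isDDF_unitStep (hx.trans_le ((hL.le_left x' y').trans htop.le)))
    (isDDF_unitStep (hy.trans_le ((hL.le_right x' y').trans htop.le)))
  have hjump : 1 ≤ tauTL L T (unitStep x) (unitStep y) (L x' y') := by
    simpa [unitStep_of_lt hx, unitStep_of_lt hy, hT.one_one] using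
      le_tauTL (T := T) (f := unitStep x) (g := unitStep y) (le_refl (L x' y'))
  have hpos : 0 < L x' y' := (zero_le.trans_lt hx).trans_le (hL.le_left x' y')
  rw [hτ.2.2.2.2 _ hpos htop,
    iSup₂_eq_bot.2 fun t ht => tauTL_unitStep_eq_zero hT hL (ht.trans_le hle)] at hjump
  exact absurd hjump (by simp)

end UnitStep

theorem tau_eq_tensor_iff_LCS (T L : ℝ≥0∞ → ℝ≥0∞ → ℝ≥0∞)
    (hT : IsLeftContTNorm T) (hL : IsRightContLOp L) :
    ((∀ f g : ℝ≥0∞ → ℝ≥0∞, IsDDF f → IsDDF g → tauTL L T f g = tensor L T f g) ↔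
      (∀ f g : ℝ≥0∞ → ℝ≥0∞, IsDDF f → IsDDF g → IsDDF (tauTL L T f g))) ∧
    ((∀ f g : ℝ≥0∞ → ℝ≥0∞, IsDDF f → IsDDF g → IsDDF (tauTL L T f g)) ↔
      (∀ x x' y y' : ℝ≥0∞, x < x' → y < y' → L x' y' < ⊤ → L x y < L x' y')) := by
  have h12 := forall₄_congr fun f g (hf : IsDDF f) (hg : IsDDF g) =>
    (isDDF_tauTL_iff_eq_tensor (L := L) hT hL hf hg).symm
  exact ⟨h12, LCS_of_forall_isDDF_tauTL hT hL,
    fun hLCS => h12.1 fun _ _ hf hg => tauTL_eq_tensor_of_LCS hT hL hLCS hf hg⟩
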